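/- arXiv:1408.0052 — 2 statements merged into one kernel-verified Lean document; each statement's English description precedes it below -/
import Mathlib

section
/- Let ℋ be finite-dimensional. The map c : L_QM → CL_QM defined by c(S) = ⋃_{𝒜 ∈ 𝔄} {(𝒜, P) ∈ S!_QM : P ≤ S(𝒜)} is an injective complete lattice homomorphism from L_QM into the powerset lattice CL_QM = 𝒫(S!_QM): it is injective, preserves arbitrary suprema and arbitrary infima (in particular ⊤ and ⊥). -/
open scoped ENNReal

variable (H : Type*) [NormedAddCommGroup H] [InnerProductSpace ℂ H] [CompleteSpace H]

/-- An orthogonal projection on the Hilbert space `H`, i.e. an element of `L(ℋ)`. -/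
def IsProj (P : H →L[ℂ] H) : Prop := IsIdempotentElem P ∧ IsSelfAdjoint P

/-- The lattice order on projections: `P ≤ Q` iff `P * Q = P`. -/
def pleq (P Q : H →L[ℂ] H) : Prop := P * Q = P

/-- An abelian (commutative) von Neumann algebra. -/
def IsAbelianAlg (A : VonNeumannAlgebra H) : Prop :=
  ∀ x ∈ A, ∀ y ∈ A, x * y = y * x
/-- The collection `𝔄` of abelian von Neumann subalgebras of `B(H)`. -/
def AbAlg := {A : VonNeumannAlgebra H // IsAbelianAlg H A}
/-- The lattice `L_QM`: monotone functions `S : 𝔄 → L(ℋ)` with `S(𝒜) ∈ L(𝒜)`. -/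
structure LQM where
  S : AbAlg H → (H →L[ℂ] H)
  isProj : ∀ A : AbAlg H, IsProj H (S A)
  mem : ∀ A : AbAlg H, S A ∈ A.1
  mono : ∀ A B : AbAlg H, A.1 ≤ B.1 → pleq H (S A) (S B)

/-- `L_QM` carries the pointwise partial order. -/
instance : PartialOrder (LQM H) where
  le S₁ S₂ := ∀ A : AbAlg H, pleq H (S₁.S A) (S₂.S A)
  le_refl S A := (S.isProj A).1
  le_trans S₁ S₂ S₃ h12 h23 A := by
    show S₁.S A * S₃.S A = S₁.S A
    calc S₁.S A * S₃.S A = S₁.S A * S₂.S A * S₃.S A := by rw [h12 A]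
      _ = S₁.S A * (S₂.S A * S₃.S A) := mul_assoc _ _ _
      _ = S₁.S A := by rw [h23 A, h12 A]
  le_antisymm S₁ S₂ h12 h21 := by
    have hS : S₁.S = S₂.S := funext fun A => by
      have hc : S₁.S A * S₂.S A = S₂.S A * S₁.S A :=
        A.2 _ (S₁.mem A) _ (S₂.mem A)
      calc S₁.S A = S₁.S A * S₂.S A := (h12 A).symm
        _ = S₂.S A * S₁.S A := hc
        _ = S₂.S A := h21 A
    cases S₁; cases S₂; cases hS; rfl

theorem LQM.le_def (S₁ S₂ : LQM H) :
    S₁ ≤ S₂ ↔ ∀ A : AbAlg H, pleq H (S₁.S A) (S₂.S A) := Iff.rfl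
/-- `P` is an atom of the Boolean lattice `L(𝒜)`, i.e. `P ∈ L₀(𝒜)`. -/
def IsAtomIn (A : VonNeumannAlgebra H) (P : H →L[ℂ] H) : Prop :=
  P ∈ A ∧ IsProj H P ∧ P ≠ 0 ∧
    ∀ Q : H →L[ℂ] H, Q ∈ A → IsProj H Q → pleq H Q P → Q = 0 ∨ Q = P

/-- The set `S!_QM` of pairs `(𝒜, P)` with `𝒜 ∈ 𝔄` and `P ∈ L₀(𝒜)` an atom of `L(𝒜)`. -/
def SBang := {x : AbAlg H × (H →L[ℂ] H) // IsAtomIn H x.1.1 x.2}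
/-- The map `c : L_QM → CL_QM = 𝒫(S!_QM)`,
`c(S) = ⋃_𝒜 {(𝒜,P) ∈ S!_QM : P ≤ S(𝒜)}`. -/
def cMap (S : LQM H) : Set (SBang H) := {x | pleq H x.1.2 (S.S x.1.1)}


/-! A projection is the orthogonal projection onto its range, and `P ≤ Q` iff `ran P ⊆ ran Q`.
Suprema and infima in `L_QM` are therefore computed pointwise on ranges: the span and the
intersection of subspaces invariant under the commutant of `𝒜` are again invariant, so their
projections lie in `𝒜`. Since `𝒜` is abelian, `P E` is a subprojection of an atom `P` for every
projection `E ∈ 𝒜`, so `P` either lies under `E` or is orthogonal to it. Hence an atom under a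
supremum lies under one of its members, which gives `c(⋁ T) = ⋃ c(T)`. In finite dimension every
nonzero projection of `𝒜` dominates an atom; applied to `E (1 - F)` this shows that `c` reflects
the order, hence is injective. -/

theorem Module.End.iSup_mem_invtSubmodule {R M ι : Type*} [Semiring R] [AddCommMonoid M]
    [Module R M] {f : Module.End R M} {p : ι → Submodule R M} (hp : ∀ i, p i ∈ f.invtSubmodule) :
    ⨆ i, p i ∈ f.invtSubmodule := by
  rw [Module.End.mem_invtSubmodule_iff_map_le, Submodule.map_iSup]
  exact iSup_mono fun i => (Module.End.mem_invtSubmodule_iff_map_le f).1 (hp i)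

theorem Module.End.iInf_mem_invtSubmodule {R M ι : Type*} [Semiring R] [AddCommMonoid M]
    [Module R M] {f : Module.End R M} {p : ι → Submodule R M} (hp : ∀ i, p i ∈ f.invtSubmodule) :
    ⨅ i, p i ∈ f.invtSubmodule := by
  rw [Module.End.mem_invtSubmodule, Submodule.comap_iInf]
  exact iInf_mono fun i => hp i

section Projections

variable {H}

theorem IsProj.isStarProjection {P : H →L[ℂ] H} (hP : IsProj H P) : IsStarProjection P :=
  ⟨hP.1, hP.2⟩

theorem pleq_iff_range_le {P Q : H →L[ℂ] H} (hP : IsStarProjection P) (hQ : IsStarProjection Q) :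
    pleq H P Q ↔ P.range ≤ Q.range := by
  rw [pleq, ← hP.le_iff_mul_eq_left hQ, ← ContinuousLinearMap.coe_le_coe_iff,
    (ContinuousLinearMap.IsStarProjection.isSymmetricProjection hP).le_iff_range_le_range
      (ContinuousLinearMap.IsStarProjection.isSymmetricProjection hQ)]

theorem starProjection_mem_iff (A : VonNeumannAlgebra H) (K : Submodule ℂ H)
    [K.HasOrthogonalProjection] :
    K.starProjection ∈ A ↔ ∀ y ∈ A.commutant, K ∈ Module.End.invtSubmodule (y : H →ₗ[ℂ] H) := by
  rw [VonNeumannAlgebra.IsStarProjection.mem_iff isStarProjection_starProjection,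
    Submodule.range_starProjection]

end Projections

namespace LQM

variable {H}

theorem isStarProjection (S : LQM H) (A : AbAlg H) : IsStarProjection (S.S A) :=
  (S.isProj A).isStarProjection

theorem range_mem_invtSubmodule (S : LQM H) (A : AbAlg H) :
    ∀ y ∈ A.1.commutant, (S.S A).range ∈ Module.End.invtSubmodule (y : H →ₗ[ℂ] H) :=
  (VonNeumannAlgebra.IsStarProjection.mem_iff (S.isStarProjection A) A.1).1 (S.mem A)

theorem range_mono (S : LQM H) {A B : AbAlg H} (hAB : A.1 ≤ B.1) :
    (S.S A).range ≤ (S.S B).range :=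
  (pleq_iff_range_le (S.isStarProjection A) (S.isStarProjection B)).1 (S.mono A B hAB)

theorem le_iff_range_le {S₁ S₂ : LQM H} :
    S₁ ≤ S₂ ↔ ∀ A : AbAlg H, (S₁.S A).range ≤ (S₂.S A).range :=
  forall_congr' fun A => pleq_iff_range_le (S₁.isStarProjection A) (S₂.isStarProjection A)

variable [FiniteDimensional ℂ H]

noncomputable def ofSubspaces (V : AbAlg H → Submodule ℂ H)
    (hV : ∀ A : AbAlg H, ∀ y ∈ A.1.commutant, V A ∈ Module.End.invtSubmodule (y : H →ₗ[ℂ] H))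
    (hmono : ∀ A B : AbAlg H, A.1 ≤ B.1 → V A ≤ V B) : LQM H where
  S A := (V A).starProjection
  isProj _ := ⟨Submodule.isIdempotentElem_starProjection _, isSelfAdjoint_starProjection _⟩
  mem A := (starProjection_mem_iff A.1 (V A)).2 (hV A)
  mono A B hAB := by
    rw [pleq_iff_range_le isStarProjection_starProjection isStarProjection_starProjection,
      Submodule.range_starProjection, Submodule.range_starProjection]
    exact hmono A B hAB

theorem range_ofSubspaces (V : AbAlg H → Submodule ℂ H) hV hmono (A : AbAlg H) :
    ((ofSubspaces V hV hmono).S A).range = V A :=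
  Submodule.range_starProjection (V A)

noncomputable instance : SupSet (LQM H) where
  sSup T := ofSubspaces (fun A => ⨆ S : T, (S.1.S A).range)
    (fun A y hy => Module.End.iSup_mem_invtSubmodule fun S => S.1.range_mem_invtSubmodule A y hy)
    (fun _ _ hAB => iSup_mono fun S => S.1.range_mono hAB)

noncomputable instance : InfSet (LQM H) where
  sInf T := ofSubspaces (fun A => ⨅ S : T, (S.1.S A).range)
    (fun A y hy => Module.End.iInf_mem_invtSubmodule fun S => S.1.range_mem_invtSubmodule A y hy)
    (fun _ _ hAB => iInf_mono fun S => S.1.range_mono hAB)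

theorem range_sSup (T : Set (LQM H)) (A : AbAlg H) :
    ((sSup T).S A).range = ⨆ S : T, (S.1.S A).range :=
  range_ofSubspaces ..

theorem range_sInf (T : Set (LQM H)) (A : AbAlg H) :
    ((sInf T).S A).range = ⨅ S : T, (S.1.S A).range :=
  range_ofSubspaces ..

theorem isLUB_sSup (T : Set (LQM H)) : IsLUB T (sSup T) := by
  refine ⟨fun S hS => le_iff_range_le.2 fun A => ?_, fun U hU => le_iff_range_le.2 fun A => ?_⟩
  · rw [range_sSup]
    exact le_iSup (fun S : T => (S.1.S A).range) ⟨S, hS⟩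
  · rw [range_sSup]
    exact iSup_le fun S => le_iff_range_le.1 (hU S.2) A

theorem isGLB_sInf (T : Set (LQM H)) : IsGLB T (sInf T) := by
  refine ⟨fun S hS => le_iff_range_le.2 fun A => ?_, fun L hL => le_iff_range_le.2 fun A => ?_⟩
  · rw [range_sInf]
    exact iInf_le (fun S : T => (S.1.S A).range) ⟨S, hS⟩
  · rw [range_sInf]
    exact le_iInf fun S => le_iff_range_le.1 (hL S.2) A

end LQM

namespace IsAtomIn

variable {H} {P : H →L[ℂ] H}

theorem isStarProjection {A : VonNeumannAlgebra H} (hP : IsAtomIn H A P) : IsStarProjection P :=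
  hP.2.1.isStarProjection

theorem mul_eq_zero_of_not_pleq {A : AbAlg H} {E : H →L[ℂ] H} (hP : IsAtomIn H A.1 P)
    (hE : E ∈ A.1) (hEp : IsStarProjection E) (hPE : ¬ pleq H P E) : P * E = 0 := by
  have hPE' : IsStarProjection (P * E) := hP.isStarProjection.mul hEp (A.2 P hP.1 E hE)
  have hle : pleq H (P * E) P := by
    rw [pleq_iff_range_le hPE' hP.isStarProjection, ContinuousLinearMap.toLinearMap_mul]
    exact LinearMap.range_comp_le_range _ _
  exact (hP.2.2.2 _ (mul_mem hP.1 hE) ⟨hPE'.1, hPE'.2⟩ hle).resolve_right hPE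

theorem exists_pleq_of_range_le_iSup {A : AbAlg H} {ι : Type*} {E : ι → H →L[ℂ] H}
    (hP : IsAtomIn H A.1 P) (hE : ∀ i, E i ∈ A.1) (hEp : ∀ i, IsStarProjection (E i))
    (hPE : P.range ≤ ⨆ i, (E i).range) : ∃ i, pleq H P (E i) := by
  by_contra! hne
  have hker : ⨆ i, (E i).range ≤ LinearMap.ker (P : H →ₗ[ℂ] H) := iSup_le fun i =>
    LinearMap.range_le_ker_iff.2 <|
      congrArg ContinuousLinearMap.toLinearMap (hP.mul_eq_zero_of_not_pleq (hE i) (hEp i) (hne i))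
  have hPP : (P : H →ₗ[ℂ] H) ∘ₗ (P : H →ₗ[ℂ] H) = 0 :=
    (LinearMap.range_le_ker_iff (f := (P : H →ₗ[ℂ] H))).1 (hPE.trans hker)
  apply hP.2.2.1
  rw [← hP.isStarProjection.isIdempotentElem.eq, ← ContinuousLinearMap.coe_inj]
  exact hPP

end IsAtomIn

section Atoms

variable {H} [FiniteDimensional ℂ H]

theorem exists_isAtomIn_pleq {A : VonNeumannAlgebra H} {E : H →L[ℂ] H} (hE : E ∈ A)
    (hEp : IsStarProjection E) (hE0 : E ≠ 0) : ∃ P, IsAtomIn H A P ∧ pleq H P E := by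
  let C := {Q : H →L[ℂ] H | Q ∈ A ∧ IsStarProjection Q ∧ Q ≠ 0 ∧ pleq H Q E}
  -- an element of `C` whose range has minimal dimension is an atom
  obtain ⟨P, ⟨hPA, hPp, hP0, hPE⟩, hmin⟩ :=
    (measure fun Q : H →L[ℂ] H => Module.finrank ℂ Q.range).wf.has_min C
      ⟨E, hE, hEp, hE0, hEp.isIdempotentElem⟩
  refine ⟨P, ⟨hPA, ⟨hPp.1, hPp.2⟩, hP0, fun Q hQA hQp hQP => ?_⟩, hPE⟩
  have hQp := hQp.isStarProjection
  by_cases hQ0 : Q = 0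
  · exact Or.inl hQ0
  have hQP' := (pleq_iff_range_le hQp hPp).1 hQP
  have hQE : pleq H Q E := (pleq_iff_range_le hQp hEp).2 <|
    hQP'.trans ((pleq_iff_range_le hPp hEp).1 hPE)
  refine Or.inr ((ContinuousLinearMap.IsStarProjection.ext_iff hQp hPp).2 ?_)
  exact Submodule.eq_of_le_of_finrank_le hQP' (not_lt.1 (hmin Q ⟨hQA, hQp, hQ0, hQE⟩))

theorem pleq_of_forall_isAtomIn {A : AbAlg H} {E F : H →L[ℂ] H} (hE : E ∈ A.1) (hF : F ∈ A.1)
    (hEp : IsStarProjection E) (hFp : IsStarProjection F)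
    (h : ∀ P, IsAtomIn H A.1 P → pleq H P E → pleq H P F) : pleq H E F := by
  -- an atom under `E (1 - F)` would lie under both `F` and `1 - F`
  set G := E * (1 - F) with hG
  have hGp : IsStarProjection G :=
    hEp.mul hFp.one_sub ((Commute.one_right E).sub_right (A.2 E hE F hF))
  have hGE : pleq H G E := by
    rw [pleq_iff_range_le hGp hEp, ContinuousLinearMap.toLinearMap_mul]
    exact LinearMap.range_comp_le_range _ _
  suffices hG0 : G = 0 by
    rw [hG, mul_sub, mul_one, sub_eq_zero] at hG0
    exact hG0.symm
  by_contra hG0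
  obtain ⟨P, hP, hPG⟩ := exists_isAtomIn_pleq (sub_mem (one_mem _) hF |> mul_mem hE) hGp hG0
  have hPE : pleq H P E := (pleq_iff_range_le hP.isStarProjection hEp).2 <|
    ((pleq_iff_range_le hP.isStarProjection hGp).1 hPG).trans ((pleq_iff_range_le hGp hEp).1 hGE)
  have hPF := h P hP hPE
  apply hP.2.2.1
  calc P = P * G := hPG.symm
    _ = P * E - P * E * F := by rw [hG, mul_sub, mul_one, mul_sub, mul_assoc]
    _ = 0 := by rw [hPE, hPF, sub_self]

end Atoms

section CMap

variable {H}

theorem mem_cMap_iff_range_le {S : LQM H} {x : SBang H} :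
    x ∈ cMap H S ↔ x.1.2.range ≤ (S.S x.1.1).range :=
  pleq_iff_range_le x.2.isStarProjection (S.isStarProjection _)

variable [FiniteDimensional ℂ H]

theorem LQM.le_of_cMap_subset {S₁ S₂ : LQM H} (h : cMap H S₁ ⊆ cMap H S₂) : S₁ ≤ S₂ :=
  fun A => pleq_of_forall_isAtomIn (S₁.mem A) (S₂.mem A) (S₁.isStarProjection A)
    (S₂.isStarProjection A) fun P hP hPS => h (a := ⟨(A, P), hP⟩) hPS

theorem cMap_injective : Function.Injective (cMap H) := fun _ _ h =>
  le_antisymm (LQM.le_of_cMap_subset h.le) (LQM.le_of_cMap_subset h.ge)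

theorem cMap_sSup (T : Set (LQM H)) : cMap H (sSup T) = ⋃₀ (cMap H '' T) := by
  ext x
  simp only [Set.sUnion_image, Set.mem_iUnion, exists_prop, mem_cMap_iff_range_le,
    LQM.range_sSup]
  constructor
  · intro h
    obtain ⟨S, hS⟩ := x.2.exists_pleq_of_range_le_iSup (fun S : T => S.1.mem _)
      (fun S => S.1.isStarProjection _) h
    exact ⟨S.1, S.2, (pleq_iff_range_le x.2.isStarProjection (S.1.isStarProjection _)).1 hS⟩
  · rintro ⟨S, hS, h⟩
    exact h.trans (le_iSup (fun S : T => (S.1.S x.1.1).range) ⟨S, hS⟩)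

theorem cMap_sInf (T : Set (LQM H)) : cMap H (sInf T) = ⋂₀ (cMap H '' T) := by
  ext x
  simp only [Set.sInter_image, Set.mem_iInter, mem_cMap_iff_range_le, LQM.range_sInf,
    le_iInf_iff, Subtype.forall]

end CMap

/-- (`ℋ` finite-dimensional.) The map `c : L_QM → CL_QM = 𝒫(S!_QM)` is
an injective complete lattice homomorphism: it is injective, and it sends arbitrary
suprema to unions and arbitrary infima to intersections (in particular `⊤` to `univ` and
`⊥` to `∅`, via the empty family). -/
theorem cMap_injective_complete_hom [FiniteDimensional ℂ H] :
    Function.Injective (cMap H) ∧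
    (∀ (T : Set (LQM H)) (j : LQM H), IsLUB T j → cMap H j = ⋃₀ (cMap H '' T)) ∧
    (∀ (T : Set (LQM H)) (m : LQM H), IsGLB T m → cMap H m = ⋂₀ (cMap H '' T)) :=
  ⟨cMap_injective,
    fun T _ hj => hj.unique (LQM.isLUB_sSup T) ▸ cMap_sSup T,
    fun T _ hm => hm.unique (LQM.isGLB_sInf T) ▸ cMap_sInf T⟩
end

section
/- Let ℋ be finite-dimensional and ρ a density operator. With P_ρ(F | F_𝒜) := Σ_{P : (𝒜,P) ∈ F} Tr(ρP), the multiplication axiom of conditional probability spaces holds on the conditions 𝒞_QM = {F_𝒜 : 𝒜 ∈ 𝔄}: for all F, G ∈ CL_QM and all 𝒜, 𝒜' ∈ 𝔄 such that G ∩ F_𝒜 = F_{𝒜'} for some 𝒜' ∈ 𝔄, one has P_ρ(F ∩ G | F_𝒜) = P_ρ(F | G ∩ F_𝒜) · P_ρ(G | F_𝒜). Consequently (S!_QM, CL_QM, 𝒞_QM, P_ρ) is a conditional probability space in the sense of Rényi. -/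
/-! In finite dimension the atoms of an abelian algebra `𝒜` are finitely many, pairwise
orthogonal, and sum to `1`; so `P_ρ(· | F_𝒜)` is the discrete measure on the fibre
`{(𝒜, P)}` with weights `Tr(ρP) = Tr(PρP) ≥ 0` and total mass `Tr ρ = 1`.
For the multiplication axiom, `G ∩ F_𝒜 = F_𝒜'` forces `𝒜 ⊆ 𝒜'` (the fibre over `𝒜'` is
nonempty). If `𝒜' = 𝒜`, then `G` contains the whole fibre over `𝒜` and both sides equal
`P_ρ(F | F_𝒜)`; otherwise `G` misses that fibre and both sides vanish. -/

open scoped ENNReal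

variable (H : Type*) [NormedAddCommGroup H] [InnerProductSpace ℂ H] [CompleteSpace H]

/-- The condition `F_𝒜 = {(𝒜',P') ∈ S!_QM : 𝒜' ⊇ 𝒜}` expressing that `𝒜` is measured. -/
def Fcond (A : AbAlg H) : Set (SBang H) := {x | A.1 ≤ x.1.1.1}
/-- The Born weight `Tr(ρP)` (as a real number). -/
noncomputable def bornWeight (ρ P : H →L[ℂ] H) : ℝ :=
  (LinearMap.trace ℂ H ↑(ρ * P)).re

/-- A density operator: a positive operator of trace one. -/
def IsDensityOp (ρ : H →L[ℂ] H) : Prop :=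
  ρ.IsPositive ∧ LinearMap.trace ℂ H ↑ρ = 1
/-- The conditional probability `P_ρ(F | F_𝒜) = Σ_{P : (𝒜,P) ∈ F} Tr(ρP)`. -/
noncomputable def Pr (ρ : H →L[ℂ] H) (F : Set (SBang H)) (A : AbAlg H) : ℝ :=
  ∑' x : {x : SBang H // x ∈ F ∧ x.1.1 = A}, bornWeight H ρ x.1.1.2

namespace IsProj

variable {H} {P Q : H →L[ℂ] H}

lemma mul_eq_right_of_pleq (hP : IsProj H P) (hQ : IsProj H Q) (hPQ : pleq H P Q) :
    Q * P = P := by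
  simpa only [star_mul, hP.2.star_eq, hQ.2.star_eq] using congrArg star hPQ

lemma range_lt_range_of_pleq (hP : IsProj H P) (hQ : IsProj H Q) (hPQ : pleq H P Q)
    (hne : P ≠ Q) : LinearMap.range (P : H →ₗ[ℂ] H) < LinearMap.range (Q : H →ₗ[ℂ] H) := by
  have hQP := mul_eq_right_of_pleq hP hQ hPQ
  have hle : LinearMap.range (P : H →ₗ[ℂ] H) ≤ LinearMap.range (Q : H →ₗ[ℂ] H) := by
    rintro _ ⟨v, rfl⟩
    exact ⟨P v, congr($hQP v)⟩
  refine hle.lt_of_ne fun heq => hne ?_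
  ext v
  obtain ⟨w, hw⟩ : Q v ∈ LinearMap.range (P : H →ₗ[ℂ] H) := heq ▸ ⟨v, rfl⟩
  rw [ContinuousLinearMap.coe_coe] at hw
  calc P v = P (Q v) := congr($hPQ v).symm
    _ = (P * P) w := by rw [← hw]; rfl
    _ = Q v := by rw [hP.1, hw]

end IsProj

section Atoms

variable {H} {A : VonNeumannAlgebra H}

lemma IsAtomIn.mul_eq_zero_of_ne (hA : IsAbelianAlg H A) {P Q : H →L[ℂ] H}
    (hP : IsAtomIn H A P) (hQ : IsAtomIn H A Q) (hne : P ≠ Q) : P * Q = 0 := by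
  have hcomm : P * Q = Q * P := hA P hP.1 Q hQ.1
  have hPQ : IsProj H (P * Q) := by
    refine ⟨hP.2.1.1.mul_of_commute hcomm hQ.2.1.1, ?_⟩
    rw [IsSelfAdjoint, star_mul, hP.2.1.2.star_eq, hQ.2.1.2.star_eq, hcomm]
  have hPQ_le : pleq H (P * Q) P := by
    rw [pleq, mul_assoc, ← hcomm, ← mul_assoc, hP.2.1.1]
  -- `P * Q ≤ P` is `0` or `P`, and `P * Q = P` means `P ≤ Q`, hence `P = Q`.
  refine (hP.2.2.2 _ (mul_mem hP.1 hQ.1) hPQ hPQ_le).resolve_right fun hPQ_eq => ?_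
  exact (hQ.2.2.2 P hP.1 hP.2.1 hPQ_eq).elim hP.2.2.1 hne

variable [FiniteDimensional ℂ H]

lemma exists_isAtomIn_pleq_s15 {Q : H →L[ℂ] H} (hQ : Q ∈ A) (hQp : IsProj H Q) (hQ0 : Q ≠ 0) :
    ∃ P, IsAtomIn H A P ∧ pleq H P Q := by
  induction hn : Module.finrank ℂ (LinearMap.range (Q : H →ₗ[ℂ] H))
    using Nat.strong_induction_on generalizing Q with
  | _ n ih =>
    by_cases hatom : ∀ T ∈ A, IsProj H T → pleq H T Q → T = 0 ∨ T = Q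
    · exact ⟨Q, ⟨hQ, hQp, hQ0, hatom⟩, hQp.1⟩
    push Not at hatom
    obtain ⟨T, hTA, hTp, hTQ, hT0, hTne⟩ := hatom
    have hlt := Submodule.finrank_lt_finrank_of_lt (hTp.range_lt_range_of_pleq hQp hTQ hTne)
    obtain ⟨P, hP, hPT⟩ := ih _ (hn ▸ hlt) hTA hTp hT0 rfl
    exact ⟨P, hP, show P * Q = P by rw [← hPT, mul_assoc, hTQ]⟩

lemma setOf_isAtomIn_finite (hA : IsAbelianAlg H A) : {P | IsAtomIn H A P}.Finite := by
  classical
  refine LinearIndependent.setFinite (R := ℂ) (linearIndependent_iff''.mpr ?_)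
  intro s g hg hsum j
  by_cases hj : j ∈ s
  · have hmul : (∑ i ∈ s, g i • (i : H →L[ℂ] H)) * j = g j • (j : H →L[ℂ] H) := by
      rw [Finset.sum_mul, Finset.sum_eq_single j _ (absurd hj)]
      · rw [smul_mul_assoc, j.2.2.1.1]
      · intro i _ hij
        rw [smul_mul_assoc, i.2.mul_eq_zero_of_ne hA j.2 (Subtype.coe_ne_coe.mpr hij), smul_zero]
    rw [hsum, zero_mul, eq_comm, smul_eq_zero] at hmul
    exact hmul.resolve_right j.2.2.2.1
  · exact hg j hj

lemma sum_isAtomIn_eq_one (hA : IsAbelianAlg H A) :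
    ∑ P ∈ (setOf_isAtomIn_finite hA).toFinset, P = 1 := by
  set T := (setOf_isAtomIn_finite hA).toFinset
  have hT : ∀ {P}, P ∈ T ↔ IsAtomIn H A P := Set.Finite.mem_toFinset _
  set S := ∑ P ∈ T, P
  have hPS : ∀ P ∈ T, P * S = P := by
    intro P hP
    rw [Finset.mul_sum, Finset.sum_eq_single P
      (fun Q hQ hQP => (hT.mp hP).mul_eq_zero_of_ne hA (hT.mp hQ) hQP.symm) (absurd hP)]
    exact (hT.mp hP).2.1.1
  have hS : IsProj H S := by
    refine ⟨?_, isSelfAdjoint_sum _ fun P hP => (hT.mp hP).2.1.2⟩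
    rw [IsIdempotentElem]
    nth_rewrite 1 [Finset.sum_mul]
    exact Finset.sum_congr rfl hPS
  -- If `S ≠ 1`, an atom `P ≤ 1 - S` would satisfy `P = P * (1 - S) = P - P = 0`.
  by_contra hS1
  obtain ⟨P, hP, hP_le⟩ := exists_isAtomIn_pleq_s15
    (sub_mem (one_mem A) (sum_mem fun P hP => (hT.mp hP).1))
    ⟨hS.1.one_sub, (IsSelfAdjoint.one _).sub hS.2⟩ (sub_ne_zero.mpr (Ne.symm hS1))
  rw [pleq, mul_sub, mul_one, hPS P (hT.mpr hP), sub_self] at hP_le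
  exact hP.2.2.1 hP_le.symm

end Atoms

section BornWeight

variable {H}

lemma bornWeight_nonneg {ρ P : H →L[ℂ] H} (hρ : ρ.IsPositive) (hP : IsProj H P) :
    0 ≤ bornWeight H ρ P := by
  have hconj := hρ.adjoint_conj P
  rw [hP.2.adjoint_eq] at hconj
  have htrace : LinearMap.trace ℂ H ↑(ρ * P) = LinearMap.trace ℂ H ↑(P ∘L ρ ∘L P) :=
    calc LinearMap.trace ℂ H ↑(ρ * P) = LinearMap.trace ℂ H ↑(ρ * P * P) := by
          rw [mul_assoc, hP.1.eq]
      _ = LinearMap.trace ℂ H ↑(P * (ρ * P)) := LinearMap.trace_mul_comm ℂ _ _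
      _ = LinearMap.trace ℂ H ↑(P ∘L ρ ∘L P) := rfl
  rw [bornWeight, htrace]
  exact (Complex.nonneg_iff.mp hconj.toLinearMap.trace_nonneg).1

lemma sum_bornWeight_isAtomIn [FiniteDimensional ℂ H] {A : VonNeumannAlgebra H}
    (hA : IsAbelianAlg H A) (ρ : H →L[ℂ] H) :
    ∑ P ∈ (setOf_isAtomIn_finite hA).toFinset, bornWeight H ρ P =
      (LinearMap.trace ℂ H ↑ρ).re := by
  simp only [bornWeight, ← Complex.re_sum, ← map_sum, ← ContinuousLinearMap.toLinearMap_sum]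
  rw [← Finset.mul_sum, sum_isAtomIn_eq_one hA, mul_one]

end BornWeight

namespace SBang

variable {H}

def fiber (A : AbAlg H) : Set (SBang H) := {x | x.1.1 = A}

def fiberEquivAtoms (A : AbAlg H) : fiber A ≃ {P | IsAtomIn H A.1 P} where
  toFun x := ⟨x.1.1.2, (congrArg Subtype.val x.2 : x.1.1.1.1 = A.1) ▸ x.1.2⟩
  invFun P := ⟨⟨(A, P), P.2⟩, rfl⟩
  left_inv := by
    rintro ⟨⟨⟨A', P⟩, hP⟩, rfl : A' = A⟩
    rfl
  right_inv _ := rfl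

lemma fiber_subset_fcond (A : AbAlg H) : fiber A ⊆ Fcond H A := by
  intro x (hx : x.1.1 = A)
  exact (congrArg Subtype.val hx).ge

instance [FiniteDimensional ℂ H] (A : AbAlg H) : Finite (fiber A) :=
  have := (setOf_isAtomIn_finite A.2).to_subtype
  .of_equiv _ (fiberEquivAtoms A).symm

end SBang

section Pr

open SBang

variable {H} {ρ : H →L[ℂ] H} {F G : Set (SBang H)} {A A' : AbAlg H}

lemma pr_eq_tsum_inter_fiber :
    Pr H ρ F A = ∑' x : ↥(F ∩ fiber A), bornWeight H ρ x.1.1.2 := rfl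

lemma pr_congr (h : F ∩ fiber A = G ∩ fiber A) : Pr H ρ F A = Pr H ρ G A := by
  rw [pr_eq_tsum_inter_fiber, h, pr_eq_tsum_inter_fiber]

lemma pr_eq_zero (h : F ∩ fiber A = ∅) : Pr H ρ F A = 0 := by
  rw [pr_eq_tsum_inter_fiber, h, tsum_empty]

lemma pr_nonneg (hρ : ρ.IsPositive) : 0 ≤ Pr H ρ F A :=
  tsum_nonneg fun x => bornWeight_nonneg hρ x.1.2.2.1

variable [FiniteDimensional ℂ H]

lemma pr_univ (hρ : LinearMap.trace ℂ H ↑ρ = 1) : Pr H ρ Set.univ A = 1 := by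
  rw [pr_eq_tsum_inter_fiber, Set.univ_inter, ← (fiberEquivAtoms A).symm.tsum_eq]
  change ∑' P : ↥{P | IsAtomIn H A.1 P}, bornWeight H ρ P = 1
  rw [← (setOf_isAtomIn_finite A.2).coe_toFinset, Finset.tsum_subtype',
    sum_bornWeight_isAtomIn A.2, hρ, Complex.one_re]

lemma pr_mono (hρ : ρ.IsPositive) (hFG : F ⊆ G) : Pr H ρ F A ≤ Pr H ρ G A := by
  rw [pr_eq_tsum_inter_fiber, pr_eq_tsum_inter_fiber]
  exact tsum_comp_le_tsum_of_inj (.of_finite) (fun x => bornWeight_nonneg hρ x.1.2.2.1)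
    (Set.inclusion_injective (Set.inter_subset_inter_left (fiber A) hFG))

lemma pr_le_one (hρ : IsDensityOp H ρ) : Pr H ρ F A ≤ 1 :=
  pr_univ (A := A) hρ.2 ▸ pr_mono hρ.1 (Set.subset_univ F)

lemma pr_iUnion {ι : Type*} (f : ι → Set (SBang H))
    (hf : Pairwise fun i j => Disjoint (f i) (f j)) :
    Pr H ρ (⋃ i, f i) A = ∑' i, Pr H ρ (f i) A := by
  have hdisj : Pairwise fun i j => Disjoint (f i ∩ fiber A) (f j ∩ fiber A) :=
    hf.mono fun _ _ h => h.mono Set.inter_subset_left Set.inter_subset_left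
  have : Finite ↥(⋃ i, f i ∩ fiber A) :=
    Set.Finite.to_subtype <| (Set.toFinite (fiber A)).subset <|
      Set.iUnion_subset fun _ => Set.inter_subset_right
  have : Finite (Σ i, ↥(f i ∩ fiber A)) := .of_equiv _ (Set.unionEqSigmaOfDisjoint hdisj)
  rw [pr_eq_tsum_inter_fiber, Set.iUnion_inter,
    ← (Set.unionEqSigmaOfDisjoint hdisj).symm.tsum_eq]
  exact Summable.tsum_sigma' (fun _ => .of_finite) .of_finite

lemma fiber_nonempty (hρ : LinearMap.trace ℂ H ↑ρ = 1) (A : AbAlg H) : (fiber A).Nonempty := by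
  by_contra hA
  have h := pr_univ (A := A) hρ
  rw [pr_eq_zero (by simpa [Set.not_nonempty_iff_eq_empty] using hA)] at h
  exact zero_ne_one h

lemma le_of_inter_fcond_eq (hρ : LinearMap.trace ℂ H ↑ρ = 1)
    (h : G ∩ Fcond H A = Fcond H A') : A.1 ≤ A'.1 := by
  obtain ⟨x, hx : x.1.1 = A'⟩ := fiber_nonempty hρ A'
  have hxA : x ∈ G ∩ Fcond H A := h ▸ fiber_subset_fcond A' hx
  exact hx ▸ hxA.2

lemma pr_inter_eq_mul (hρ : IsDensityOp H ρ) (h : G ∩ Fcond H A = Fcond H A') :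
    Pr H ρ (F ∩ G) A = Pr H ρ F A' * Pr H ρ G A := by
  by_cases hA : A' = A
  · subst hA
    have hG : G ∩ fiber A' = fiber A' :=
      Set.inter_eq_right.mpr ((fiber_subset_fcond A').trans (Set.inter_eq_right.mp h))
    rw [pr_congr (G := F) (by rw [Set.inter_assoc, hG]),
      pr_congr (F := G) (G := Set.univ) (by rw [hG, Set.univ_inter]), pr_univ hρ.2, mul_one]
  · -- A point of `G` over `A` lies in `Fcond A'`, forcing `A' ≤ A ≤ A'`.
    have hG : G ∩ fiber A = ∅ := by
      refine Set.eq_empty_of_forall_notMem fun x ⟨hxG, hxA⟩ => hA (Subtype.ext ?_)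
      have hx : x ∈ Fcond H A' := h ▸ ⟨hxG, fiber_subset_fcond A hxA⟩
      exact le_antisymm ((congrArg Subtype.val (hxA : x.1.1 = A)) ▸ hx)
        (le_of_inter_fcond_eq hρ.2 h)
    rw [pr_eq_zero (F := F ∩ G) (by rw [Set.inter_assoc, hG, Set.inter_empty]),
      pr_eq_zero hG, mul_zero]

end Pr

/-- (`ℋ` finite-dimensional, `ρ` a density operator.) The multiplication
axiom of conditional probability spaces holds on the conditions `𝒞_QM = {F_𝒜 : 𝒜 ∈ 𝔄}`:
whenever `G ∩ F_𝒜 = F_𝒜'`, `P_ρ(F ∩ G | F_𝒜) = P_ρ(F | G ∩ F_𝒜) · P_ρ(G | F_𝒜)`.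
Together with the fact that each `P_ρ(· | F_𝒜)` is a probability measure, this makes
`(S!_QM, CL_QM, 𝒞_QM, P_ρ)` a conditional probability space in the sense of Rényi. -/
theorem pr_conditional_probability_space [FiniteDimensional ℂ H] (ρ : H →L[ℂ] H)
    (hρ : IsDensityOp H ρ) :
    (∀ (F G : Set (SBang H)) (A A' : AbAlg H), G ∩ Fcond H A = Fcond H A' →
      Pr H ρ (F ∩ G) A = Pr H ρ F A' * Pr H ρ G A) ∧
    (∀ (A : AbAlg H) (F : Set (SBang H)), 0 ≤ Pr H ρ F A ∧ Pr H ρ F A ≤ 1) ∧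
    (∀ A : AbAlg H, Pr H ρ Set.univ A = 1) ∧
    (∀ (A : AbAlg H) (f : ℕ → Set (SBang H)), Pairwise (fun i j => Disjoint (f i) (f j)) →
      Pr H ρ (⋃ i, f i) A = ∑' i, Pr H ρ (f i) A) :=
  ⟨fun _ _ _ _ h => pr_inter_eq_mul hρ h, fun _ _ => ⟨pr_nonneg hρ.1, pr_le_one hρ⟩,
    fun _ => pr_univ hρ.2, fun _ f hf => pr_iUnion f hf⟩
end
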